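/- For all real ξ with |ξ| > 1, ω'(r(ξ)) = ω'(ξ), where ω(ξ) = ξ/(1+ξ²) and r(ξ) = sgn(ξ)·√((ξ²+3)/(ξ²-1)). -/

import Mathlib

noncomputable def ω : ℝ → ℝ := fun ξ => ξ / (1 + ξ ^ 2)

noncomputable def r : ℝ → ℝ := fun ξ =>
  Real.sign ξ * Real.sqrt ((ξ ^ 2 + 3) / (ξ ^ 2 - 1))

lemma deriv_omega (x : ℝ) : deriv ω x = (1 - x ^ 2) / (1 + x ^ 2) ^ 2 := by
  have hden : (1 : ℝ) + x ^ 2 ≠ 0 := by positivity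
  have h : HasDerivAt ω ((1 * (1 + x ^ 2) - x * (2 * x)) / (1 + x ^ 2) ^ 2) x := by
    have h1 : HasDerivAt (fun y : ℝ => y) 1 x := hasDerivAt_id x
    have h2 : HasDerivAt (fun y : ℝ => 1 + y ^ 2) (2 * x) x := by
      simpa using (hasDerivAt_pow 2 x).const_add 1
    unfold ω; simpa [Pi.div_def] using h1.div h2 hden
  rw [h.deriv]
  ring_nf

theorem omega_deriv_reflection (ξ : ℝ) (hξ : 1 < |ξ|) :
    deriv ω (r ξ) = deriv ω ξ := by
  have hne : ξ ≠ 0 := by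
    intro h; rw [h] at hξ; norm_num at hξ
  have h1 : ξ ^ 2 - 1 > 0 := by
    have : 1 < ξ ^ 2 := by
      rw [← sq_abs]; nlinarith [abs_nonneg ξ]
    linarith
  have hsq : (r ξ) ^ 2 = (ξ ^ 2 + 3) / (ξ ^ 2 - 1) := by
    have hnn : (0:ℝ) ≤ (ξ ^ 2 + 3) / (ξ ^ 2 - 1) := by positivity
    have hsgn : Real.sign ξ ^ 2 = 1 := by
      rcases Real.sign_apply_eq_of_ne_zero ξ hne with h | h <;> rw [h] <;> norm_num
    rw [r, mul_pow, Real.sq_sqrt hnn, hsgn, one_mul]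
  rw [deriv_omega, deriv_omega, hsq]
  have h2 : (1:ℝ) + ξ ^ 2 ≠ 0 := by positivity
  field_simp
  ring
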